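/- For all k, ℓ ∈ ℤ² ∖ {(0,0)}, with a = (k₂ℓ₁ − k₁ℓ₂)/(|k||ℓ|), one has 𝒵^{1,1}_{k,ℓ}(x) + 𝒵^{0,0}_{k,ℓ}(x) = a·sin((k−ℓ)·x)·(ℓ₂ − k₂, k₁ − ℓ₁) for all x ∈ ℝ²; moreover, if k ≠ ℓ then ⟨𝒵^{1,1}_{k,ℓ} + 𝒵^{0,0}_{k,ℓ}, e^1_{k−ℓ}⟩_{L²} = 2π²·a·|k−ℓ|. -/

import Mathlib

/-- Euclidean norm of an integer vector. -/
noncomputable def znorm (k : ℤ × ℤ) : ℝ := Real.sqrt ((k.1 : ℝ) ^ 2 + (k.2 : ℝ) ^ 2)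

/-- The pairing `k · x = k₁x₁ + k₂x₂`. -/
noncomputable def kdot (k : ℤ × ℤ) (x : ℝ × ℝ) : ℝ := (k.1 : ℝ) * x.1 + (k.2 : ℝ) * x.2

/-- The vector field `e_k^0(x) = (k₂/|k|, −k₁/|k|)·cos(k·x)`. -/
noncomputable def e0 (k : ℤ × ℤ) : ℝ × ℝ → ℝ × ℝ := fun x =>
  (((k.2 : ℝ) / znorm k) * Real.cos (kdot k x), (-(k.1 : ℝ) / znorm k) * Real.cos (kdot k x))

/-- The vector field `e_k^1(x) = (−k₂/|k|, k₁/|k|)·sin(k·x)`. -/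
noncomputable def e1 (k : ℤ × ℤ) : ℝ × ℝ → ℝ × ℝ := fun x =>
  ((-(k.2 : ℝ) / znorm k) * Real.sin (kdot k x), ((k.1 : ℝ) / znorm k) * Real.sin (kdot k x))

/-- The advection `b(u,v) = (u·∇)v`, i.e. the derivative of `v` in the direction `u`. -/
noncomputable def adv (u v : ℝ × ℝ → ℝ × ℝ) : ℝ × ℝ → ℝ × ℝ := fun x => fderiv ℝ v x (u x)

/-- The `L²` pairing `⟨f,g⟩ = ∫_{[−π,π]²} f(x)·g(x) dx`. -/
noncomputable def pairL2 (f g : ℝ × ℝ → ℝ × ℝ) : ℝ :=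
  ∫ x in Set.Icc ((-Real.pi, -Real.pi) : ℝ × ℝ) ((Real.pi, Real.pi) : ℝ × ℝ),
    ((f x).1 * (g x).1 + (f x).2 * (g x).2)

/-- `𝒥^{0,1}_{k,ℓ} = b(e_k^0, e_ℓ^1) + b(e_ℓ^1, e_k^0)`. -/
noncomputable def J01 (k l : ℤ × ℤ) : ℝ × ℝ → ℝ × ℝ := fun x =>
  adv (e0 k) (e1 l) x + adv (e1 l) (e0 k) x

/-- `𝒥^{0,0}_{k,ℓ} = b(e_k^0, e_ℓ^0) + b(e_ℓ^0, e_k^0)`. -/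
noncomputable def J00 (k l : ℤ × ℤ) : ℝ × ℝ → ℝ × ℝ := fun x =>
  adv (e0 k) (e0 l) x + adv (e0 l) (e0 k) x

/-- `𝒥^{1,1}_{k,ℓ} = b(e_k^1, e_ℓ^1) + b(e_ℓ^1, e_k^1)`. -/
noncomputable def J11 (k l : ℤ × ℤ) : ℝ × ℝ → ℝ × ℝ := fun x =>
  adv (e1 k) (e1 l) x + adv (e1 l) (e1 k) x

/-- `𝒵^{0,1}_{k,ℓ} = b(e_k^0, e_ℓ^1) − b(e_ℓ^1, e_k^0)`. -/
noncomputable def Z01 (k l : ℤ × ℤ) : ℝ × ℝ → ℝ × ℝ := fun x =>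
  adv (e0 k) (e1 l) x - adv (e1 l) (e0 k) x

/-- `𝒵^{0,0}_{k,ℓ} = b(e_k^0, e_ℓ^0) − b(e_ℓ^0, e_k^0)`. -/
noncomputable def Z00 (k l : ℤ × ℤ) : ℝ × ℝ → ℝ × ℝ := fun x =>
  adv (e0 k) (e0 l) x - adv (e0 l) (e0 k) x

/-- `𝒵^{1,1}_{k,ℓ} = b(e_k^1, e_ℓ^1) − b(e_ℓ^1, e_k^1)`. -/
noncomputable def Z11 (k l : ℤ × ℤ) : ℝ × ℝ → ℝ × ℝ := fun x =>
  adv (e1 k) (e1 l) x - adv (e1 l) (e1 k) x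


open MeasureTheory Real intervalIntegral

noncomputable def kdotL (l : ℤ × ℤ) : (ℝ × ℝ) →L[ℝ] ℝ :=
  (l.1 : ℝ) • ContinuousLinearMap.fst ℝ ℝ ℝ + (l.2 : ℝ) • ContinuousLinearMap.snd ℝ ℝ ℝ

lemma hasFDerivAt_kdot (l : ℤ × ℤ) (x : ℝ × ℝ) :
    HasFDerivAt (kdot l) (kdotL l) x := by
  have : (kdot l) = fun x : ℝ × ℝ => kdotL l x := by
    funext y
    simp [kdot, kdotL]
  rw [this]
  exact (kdotL l).hasFDerivAt

lemma hasFDerivAt_e1 (l : ℤ × ℤ) (x : ℝ × ℝ) :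
    HasFDerivAt (e1 l)
      ((((-(l.2 : ℝ) / znorm l) * Real.cos (kdot l x)) • kdotL l).prod
       ((((l.1 : ℝ) / znorm l) * Real.cos (kdot l x)) • kdotL l)) x := by
  have hsin : HasFDerivAt (fun y : ℝ × ℝ => Real.sin (kdot l y))
      (Real.cos (kdot l x) • kdotL l) x :=
    (Real.hasDerivAt_sin (kdot l x)).comp_hasFDerivAt x (hasFDerivAt_kdot l x)
  have h1 := hsin.const_mul (-(l.2 : ℝ) / znorm l)
  have h2 := hsin.const_mul ((l.1 : ℝ) / znorm l)
  have : HasFDerivAt (e1 l) (((-(l.2 : ℝ) / znorm l) • Real.cos (kdot l x) • kdotL l).prod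
      (((l.1 : ℝ) / znorm l) • Real.cos (kdot l x) • kdotL l)) x := h1.prodMk h2
  convert this using 2 <;> rw [smul_smul]

lemma adv_e1 (l : ℤ × ℤ) (u : ℝ × ℝ → ℝ × ℝ) (x : ℝ × ℝ) :
    adv u (e1 l) x =
      ((-(l.2 : ℝ) / znorm l) * (Real.cos (kdot l x) * kdot l (u x)),
       ((l.1 : ℝ) / znorm l) * (Real.cos (kdot l x) * kdot l (u x))) := by
  simp only [adv, (hasFDerivAt_e1 l x).fderiv]
  simp [kdotL, kdot, mul_assoc]
  constructor <;> ring

lemma hasFDerivAt_e0 (l : ℤ × ℤ) (x : ℝ × ℝ) :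
    HasFDerivAt (e0 l)
      (((((l.2 : ℝ) / znorm l) * -Real.sin (kdot l x)) • kdotL l).prod
       ((((-(l.1 : ℝ)) / znorm l) * -Real.sin (kdot l x)) • kdotL l)) x := by
  have hcos : HasFDerivAt (fun y : ℝ × ℝ => Real.cos (kdot l y))
      (-Real.sin (kdot l x) • kdotL l) x :=
    (Real.hasDerivAt_cos (kdot l x)).comp_hasFDerivAt x (hasFDerivAt_kdot l x)
  have h1 := hcos.const_mul ((l.2 : ℝ) / znorm l)
  have h2 := hcos.const_mul (-(l.1 : ℝ) / znorm l)
  have : HasFDerivAt (e0 l) ((((l.2 : ℝ) / znorm l) • -Real.sin (kdot l x) • kdotL l).prod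
      ((-(l.1 : ℝ) / znorm l) • -Real.sin (kdot l x) • kdotL l)) x := h1.prodMk h2
  convert this using 2 <;> rw [smul_smul]

lemma adv_e0 (l : ℤ × ℤ) (u : ℝ × ℝ → ℝ × ℝ) (x : ℝ × ℝ) :
    adv u (e0 l) x =
      (((l.2 : ℝ) / znorm l) * (-Real.sin (kdot l x) * kdot l (u x)),
       (-(l.1 : ℝ) / znorm l) * (-Real.sin (kdot l x) * kdot l (u x))) := by
  simp only [adv, (hasFDerivAt_e0 l x).fderiv]
  simp [kdotL, kdot, mul_assoc]
  constructor <;> ring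

lemma znorm_pos (k : ℤ × ℤ) (hk : k ≠ (0, 0)) : 0 < znorm k := by
  apply Real.sqrt_pos.mpr
  have h : (k.1 : ℝ) ≠ 0 ∨ (k.2 : ℝ) ≠ 0 := by
    by_contra h
    push_neg at h
    exact hk (Prod.ext (by exact_mod_cast h.1) (by exact_mod_cast h.2))
  rcases h with h | h <;> positivity

lemma kdot_sub (k l : ℤ × ℤ) (x : ℝ × ℝ) :
    kdot (k - l) x = kdot k x - kdot l x := by
  simp [kdot, Prod.fst_sub, Prod.snd_sub]
  ring

lemma pointwise_id (k l : ℤ × ℤ) (hk : k ≠ (0, 0)) (hl : l ≠ (0, 0))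
    (a : ℝ) (ha : a = ((k.2 : ℝ) * (l.1 : ℝ) - (k.1 : ℝ) * (l.2 : ℝ)) / (znorm k * znorm l))
    (x : ℝ × ℝ) :
    Z11 k l x + Z00 k l x =
      (a * Real.sin (kdot (k - l) x) * ((l.2 : ℝ) - (k.2 : ℝ)),
       a * Real.sin (kdot (k - l) x) * ((k.1 : ℝ) - (l.1 : ℝ))) := by
  have hknz := (znorm_pos k hk).ne'
  have hlnz := (znorm_pos l hl).ne'
  simp only [Z11, Z00, adv_e1, adv_e0, kdot_sub, Real.sin_sub]
  simp only [ha, e0, e1, Prod.mk_add_mk, Prod.mk_sub_mk, Prod.mk.injEq, kdot]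
  constructor <;> (field_simp; ring)

lemma intsin (n : ℤ) : ∫ t in Set.Icc (-π) π, Real.sin (2 * n * t) = 0 := by
  rw [integral_Icc_eq_integral_Ioc, ← intervalIntegral.integral_of_le (by linarith [pi_pos])]
  rcases eq_or_ne (n : ℝ) 0 with h | h
  · simp [h]
  · have h2 : (2 * (n:ℝ)) ≠ 0 := by simp [h]
    rw [intervalIntegral.integral_comp_mul_left Real.sin h2, integral_sin]
    have : Real.cos (2 * (n:ℝ) * -π) = Real.cos (2 * n * π) := by
      rw [show 2*(n:ℝ)*-π = -(2*n*π) by ring, Real.cos_neg]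
    rw [this]; simp

lemma intcos (n : ℤ) (hn : n ≠ 0) : ∫ t in Set.Icc (-π) π, Real.cos (2 * n * t) = 0 := by
  rw [integral_Icc_eq_integral_Ioc, ← intervalIntegral.integral_of_le (by linarith [pi_pos])]
  have h2 : (2 * (n:ℝ)) ≠ 0 := by simp [hn]
  rw [intervalIntegral.integral_comp_mul_left Real.cos h2, integral_cos]
  have h1 : Real.sin (2 * (n:ℝ) * π) = 0 := by
    have := Real.sin_int_mul_pi (2*n)
    push_cast at this ⊢
    linarith [this]
  have hm : Real.sin (2 * (n:ℝ) * -π) = 0 := by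
    rw [show 2*(n:ℝ)*-π = -(2*n*π) by ring, Real.sin_neg, h1, neg_zero]
  rw [h1, hm]; simp

lemma box_eq : Set.Icc ((-π, -π) : ℝ × ℝ) ((π, π) : ℝ × ℝ)
    = (Set.Icc (-π) π) ×ˢ (Set.Icc (-π) π) := Set.Icc_prod_eq _ _

lemma int_sin_sq (m : ℤ × ℤ) (hm : m ≠ (0, 0)) :
    ∫ x in Set.Icc ((-π, -π) : ℝ × ℝ) ((π, π) : ℝ × ℝ), Real.sin (kdot m x) ^ 2
      = 2 * π ^ 2 := by
  have hpt : ∀ x : ℝ × ℝ, Real.sin (kdot m x) ^ 2 =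
      1/2 - (1/2) * (Real.cos (2*m.1*x.1) * Real.cos (2*m.2*x.2))
          + (1/2) * (Real.sin (2*m.1*x.1) * Real.sin (2*m.2*x.2)) := by
    intro x
    have h1 : Real.sin (kdot m x) ^ 2 = 1/2 - Real.cos (2 * kdot m x) / 2 := by
      rw [Real.cos_two_mul]
      have := Real.sin_sq_add_cos_sq (kdot m x)
      nlinarith
    rw [h1, show 2 * kdot m x = 2*(m.1:ℝ)*x.1 + 2*(m.2:ℝ)*x.2 by simp [kdot]; ring,
      Real.cos_add]
    ring
  simp only [hpt]
  rw [box_eq, Measure.volume_eq_prod]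
  have hμ : (volume.prod volume) ((Set.Icc (-π) π : Set ℝ) ×ˢ (Set.Icc (-π) π : Set ℝ)) ≠ ⊤ := by
    rw [Measure.prod_prod]
    exact ENNReal.mul_ne_top (by simp [Real.volume_Icc]) (by simp [Real.volume_Icc])
  have hcompact : IsCompact ((Set.Icc (-π) π : Set ℝ) ×ˢ (Set.Icc (-π) π : Set ℝ)) :=
    isCompact_Icc.prod isCompact_Icc
  have hint1 : IntegrableOn (fun x : ℝ × ℝ => Real.cos (2*m.1*x.1) * Real.cos (2*m.2*x.2))
      ((Set.Icc (-π) π : Set ℝ) ×ˢ (Set.Icc (-π) π : Set ℝ)) (volume.prod volume) := by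
    apply ContinuousOn.integrableOn_compact hcompact
    exact (((Real.continuous_cos.comp (by fun_prop)).mul (Real.continuous_cos.comp (by fun_prop)))).continuousOn
  have hint2 : IntegrableOn (fun x : ℝ × ℝ => Real.sin (2*m.1*x.1) * Real.sin (2*m.2*x.2))
      ((Set.Icc (-π) π : Set ℝ) ×ˢ (Set.Icc (-π) π : Set ℝ)) (volume.prod volume) := by
    apply ContinuousOn.integrableOn_compact hcompact
    exact (((Real.continuous_sin.comp (by fun_prop)).mul (Real.continuous_sin.comp (by fun_prop)))).continuousOn
  have hconst : IntegrableOn (fun _ : ℝ × ℝ => (1:ℝ)/2)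
      ((Set.Icc (-π) π : Set ℝ) ×ˢ (Set.Icc (-π) π : Set ℝ)) (volume.prod volume) :=
    integrableOn_const hμ
  have hI1 : Integrable (fun x : ℝ × ℝ => 1/2 - 1/2 * (Real.cos (2*m.1*x.1) * Real.cos (2*m.2*x.2)))
      ((volume.prod volume).restrict ((Set.Icc (-π) π : Set ℝ) ×ˢ (Set.Icc (-π) π : Set ℝ))) := by
    exact hconst.sub (hint1.const_mul _)
  have hI2 : Integrable (fun x : ℝ × ℝ => 1/2 * (Real.sin (2*m.1*x.1) * Real.sin (2*m.2*x.2)))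
      ((volume.prod volume).restrict ((Set.Icc (-π) π : Set ℝ) ×ˢ (Set.Icc (-π) π : Set ℝ))) := by
    exact hint2.const_mul _
  rw [integral_add hI1 hI2,
      integral_sub hconst (by exact hint1.const_mul _),
      MeasureTheory.integral_const_mul, MeasureTheory.integral_const_mul,
      setIntegral_prod_mul (fun t => Real.cos (2*m.1*t)) (fun t => Real.cos (2*m.2*t)),
      setIntegral_prod_mul (fun t => Real.sin (2*m.1*t)) (fun t => Real.sin (2*m.2*t)),
      intsin m.1, MeasureTheory.integral_const]
  have hcos : (∫ t in Set.Icc (-π) π, Real.cos (2*m.1*t)) * (∫ t in Set.Icc (-π) π, Real.cos (2*m.2*t)) = 0 := by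
    rcases eq_or_ne m.1 0 with h | h
    · have h2 : m.2 ≠ 0 := by
        intro h2; exact hm (Prod.ext h h2)
      rw [intcos m.2 h2, mul_zero]
    · rw [intcos m.1 h, zero_mul]
  rw [hcos]
  rw [measureReal_def]
  rw [Measure.restrict_apply_univ, Measure.prod_prod]
  simp [Real.volume_Icc]
  rw [ENNReal.toReal_ofReal (by linarith [pi_pos] : (0:ℝ) ≤ π + π)]
  ring

theorem Z11_Z00_sum_identity_and_pairing (k l : ℤ × ℤ) (hk : k ≠ (0, 0)) (hl : l ≠ (0, 0))
    (a : ℝ) (ha : a = ((k.2 : ℝ) * (l.1 : ℝ) - (k.1 : ℝ) * (l.2 : ℝ)) / (znorm k * znorm l)) :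
    (∀ x : ℝ × ℝ,
      Z11 k l x + Z00 k l x =
        (a * Real.sin (kdot (k - l) x) * ((l.2 : ℝ) - (k.2 : ℝ)),
         a * Real.sin (kdot (k - l) x) * ((k.1 : ℝ) - (l.1 : ℝ)))) ∧
    (k ≠ l →
      pairL2 (fun x => Z11 k l x + Z00 k l x) (e1 (k - l)) =
        2 * Real.pi ^ 2 * a * znorm (k - l)) := by
  refine ⟨pointwise_id k l hk hl a ha, fun hkl => ?_⟩
  set m := k - l with hm_def
  have hm : m ≠ (0, 0) := by
    intro h
    apply hkl
    have : k - l = 0 := by rw [← Prod.mk_zero_zero]; exact h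
    exact sub_eq_zero.mp this
  have hz := znorm_pos m hm
  have hz2 : znorm m ^ 2 = ((m.1 : ℝ)) ^ 2 + ((m.2 : ℝ)) ^ 2 :=
    Real.sq_sqrt (by positivity)
  have hm1 : ((m.1 : ℝ)) = (k.1 : ℝ) - (l.1 : ℝ) := by
    rw [hm_def]; push_cast [Prod.fst_sub]; ring
  have hm2 : ((m.2 : ℝ)) = (k.2 : ℝ) - (l.2 : ℝ) := by
    rw [hm_def]; push_cast [Prod.snd_sub]; ring
  have hfun : ∀ x : ℝ × ℝ,
      (Z11 k l x + Z00 k l x).1 * (e1 m x).1 + (Z11 k l x + Z00 k l x).2 * (e1 m x).2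
        = (a * znorm m) * Real.sin (kdot m x) ^ 2 := by
    intro x
    rw [pointwise_id k l hk hl a ha x, ← hm_def]
    simp only [e1]
    rw [hm1, hm2] at hz2 ⊢
    field_simp
    linear_combination (-(a * Real.sin (kdot m x) ^ 2)) * hz2
  simp only [pairL2, hfun]
  rw [MeasureTheory.integral_const_mul, int_sin_sq m hm]
  ring
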